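/- arXiv:2411.06430 — 6 statements merged into one kernel-verified Lean document; each statement's English description precedes it below -/
import Mathlib

section
/- For all natural numbers a, b ≥ 1, gcd(a,b) = (⌊5^(ab(ab+a+b)) / ((5^(a²b) − 1)(5^(ab²) − 1))⌋ mod 5^(ab)) − 1. -/
open Finset

private lemma geo_aux5 (x : ℤ) (a K : ℕ) :
    (x ^ a - 1) * ∑ i ∈ range (K / a + 1), x ^ (K - a * i) =
      x ^ (K + a) - x ^ (K % a) := by
  have hmd := Nat.mod_add_div K a
  have hstep : ∀ i ∈ range (K / a + 1), x ^ (K - a * i) = x ^ (K % a) * (x ^ a) ^ (K / a - i) := by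
    intro i hi
    simp only [mem_range, Nat.lt_succ_iff] at hi
    rw [← pow_mul, ← pow_add]
    congr 1
    have h3 : a * (K / a - i) = a * (K / a) - a * i := Nat.mul_sub _ _ _
    have h4 : a * i ≤ a * (K / a) := Nat.mul_le_mul_left a hi
    omega
  rw [Finset.sum_congr rfl hstep, ← Finset.mul_sum]
  have hrefl : ∑ i ∈ range (K / a + 1), (x ^ a) ^ (K / a - i)
      = ∑ i ∈ range (K / a + 1), (x ^ a) ^ i := by
    rw [← Finset.sum_range_reflect]
    exact Finset.sum_congr rfl
      (by intro i hi; simp only [mem_range, Nat.lt_succ_iff] at hi; congr 1; omega)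
  rw [hrefl, mul_comm (x ^ a - 1), mul_assoc, geom_sum_mul, ← pow_mul, mul_sub, ← pow_add, mul_one]
  have h5 : a * (K / a + 1) = a * (K / a) + a := by ring
  congr 2
  omega

private lemma key_id5 (X : ℤ) (a b : ℕ) :
    (X ^ a - 1) * (X ^ b - 1) *
      (∑ j ∈ range (a + 1), ∑ i ∈ range (b * (a - j) / a + 1), X ^ (b * (a - j) - a * i))
    + (X ^ b - 1) * (∑ j ∈ range (a + 1), X ^ (b * (a - j) % a))
    + X ^ a = X ^ (a * b + a + b) := by
  have h1 : (X ^ a - 1) *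
      (∑ j ∈ range (a + 1), ∑ i ∈ range (b * (a - j) / a + 1), X ^ (b * (a - j) - a * i))
      = (∑ j ∈ range (a + 1), X ^ (b * (a - j) + a))
        - (∑ j ∈ range (a + 1), X ^ (b * (a - j) % a)) := by
    rw [Finset.mul_sum, ← Finset.sum_sub_distrib]
    exact Finset.sum_congr rfl fun j _ => geo_aux5 X a _
  have h2 : ∑ j ∈ range (a + 1), X ^ (b * (a - j) + a)
      = ∑ j ∈ range (a + 1), X ^ a * (X ^ b) ^ j := by
    rw [← Finset.sum_range_reflect (fun j => X ^ a * (X ^ b) ^ j) (a + 1)]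
    refine Finset.sum_congr rfl fun j hj => ?_
    simp only [mem_range, Nat.lt_succ_iff] at hj
    rw [← pow_mul, ← pow_add]
    congr 1
    have : a + 1 - 1 - j = a - j := by omega
    rw [this, Nat.add_comm]
  have h3 : (X ^ b - 1) * ∑ j ∈ range (a + 1), X ^ a * (X ^ b) ^ j
      = X ^ (a * b + a + b) - X ^ a := by
    rw [← Finset.mul_sum, mul_comm (X ^ b - 1), mul_assoc, geom_sum_mul, ← pow_mul, mul_sub,
      ← pow_add, mul_one]
    congr 2
    ring
  rw [h2] at h1
  linear_combination (X ^ b - 1) * h1 + h3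

private lemma add_four_le_pow5 (a : ℕ) (ha : 1 ≤ a) : a + 4 ≤ 5 ^ a := by
  induction a with
  | zero => omega
  | succ n ih =>
    rcases Nat.eq_zero_or_pos n with h | h
    · subst h; norm_num
    · have h1 := ih h
      have h2 : 5 ^ (n + 1) = 5 * 5 ^ n := by ring
      omega

-- the inner sum, mod x
private lemma inner_mod (x a : ℕ) (hx : 2 ≤ x) (ha : 1 ≤ a) (K : ℕ) :
    (∑ i ∈ range (K / a + 1), x ^ (K - a * i)) % x = if a ∣ K then 1 else 0 := by
  have hmd := Nat.mod_add_div K a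
  rw [Finset.sum_range_succ]
  have hlast : K - a * (K / a) = K % a := by omega
  have hdvd : x ∣ ∑ i ∈ range (K / a), x ^ (K - a * i) := by
    refine Finset.dvd_sum fun i hi => ?_
    simp only [mem_range] at hi
    have h4 : a * (i + 1) ≤ a * (K / a) := Nat.mul_le_mul_left a hi
    have h5 : a * (i + 1) = a * i + a := by ring
    exact dvd_pow_self x (by omega)
  obtain ⟨c, hc⟩ := hdvd
  rw [hc, hlast, Nat.add_mod, Nat.mul_mod_right]
  by_cases hd : a ∣ K
  · obtain ⟨c, rfl⟩ := hd
    simp [Nat.mul_mod_right, Nat.one_mod_eq_one.mpr (show x ≠ 1 by omega), Dvd.intro c rfl]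
  · have h0 : K % a ≠ 0 := fun h => hd (Nat.dvd_of_mod_eq_zero h)
    have hxx : x ^ (K % a) = x * x ^ (K % a - 1) := by
      conv_lhs => rw [show K % a = (K % a - 1) + 1 by omega]
      rw [pow_succ']
    rw [hxx, Nat.mul_mod_right, if_neg hd]
    simp
private lemma R_bound5 (x C Y A e : ℤ) (h5 : 5 ≤ x) (hA : 1 ≤ A) (hxA : A + 4 ≤ x)
    (hC : 1 ≤ C) (hY : x ≤ Y) (he : 0 ≤ e) (hEb : e ≤ 2 + (A - 1) * C) :
    x * C + (Y - 1) * e < (x * C - 1) * (Y - 1) := by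
  nlinarith [mul_le_mul_of_nonneg_left hEb (show (0 : ℤ) ≤ Y - 1 by linarith),
    mul_le_mul_of_nonneg_right hY (show (0 : ℤ) ≤ C by linarith),
    mul_nonneg (mul_nonneg (show (0 : ℤ) ≤ x - A - 4 by linarith)
      (show (0 : ℤ) ≤ C by linarith)) (show (0 : ℤ) ≤ Y by linarith),
    mul_nonneg (show (0 : ℤ) ≤ C - 1 by linarith) (show (0 : ℤ) ≤ Y by linarith),
    mul_nonneg (show (0 : ℤ) ≤ A - 1 by linarith) (show (0 : ℤ) ≤ C by linarith)]

private lemma count_dvd5 (a b : ℕ) (ha : 1 ≤ a) (hb : 1 ≤ b) :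
    (∑ j ∈ range (a + 1), if a ∣ b * (a - j) then 1 else 0) = Nat.gcd a b + 1 := by
  set d := Nat.gcd a b with hdd
  have hd : 0 < d := Nat.gcd_pos_of_pos_left b ha
  set a' := a / d with ha'
  have haa : d * a' = a := Nat.mul_div_cancel' (Nat.gcd_dvd_left a b)
  have hbb : d * (b / d) = b := Nat.mul_div_cancel' (Nat.gcd_dvd_right a b)
  have cop : Nat.Coprime a' (b / d) := Nat.coprime_div_gcd_div_gcd hd
  have hcond : ∀ j ∈ range (a + 1), (a ∣ b * (a - j)) ↔ (a' ∣ j) := by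
    intro j hj
    simp only [mem_range, Nat.lt_succ_iff] at hj
    have hsub : b * (a - j) = b * a - b * j := Nat.mul_sub _ _ _
    have hba : a ∣ b * a := dvd_mul_left a b
    have hle : b * j ≤ b * a := Nat.mul_le_mul_left b hj
    have step1 : (a ∣ b * (a - j)) ↔ (a ∣ b * j) := by
      constructor
      · intro h
        have heq : b * j = b * a - b * (a - j) := by omega
        rw [heq]
        exact Nat.dvd_sub hba h
      · intro h
        rw [hsub]
        exact Nat.dvd_sub hba h
    rw [step1]
    constructor
    · intro h
      have h2 : d * a' ∣ d * ((b / d) * j) := by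
        rw [haa, ← mul_assoc, hbb]; exact h
      have h3 : a' ∣ (b / d) * j := (Nat.mul_dvd_mul_iff_left hd).mp h2
      exact cop.dvd_of_dvd_mul_left h3
    · intro h
      calc a = d * a' := haa.symm
        _ ∣ d * ((b / d) * j) := Nat.mul_dvd_mul_left d (Dvd.dvd.mul_left h _)
        _ = b * j := by rw [← mul_assoc, hbb]
  calc (∑ j ∈ range (a + 1), if a ∣ b * (a - j) then 1 else 0)
      = ∑ j ∈ range (a + 1), if a' ∣ j then 1 else 0 :=
        Finset.sum_congr rfl fun j hj => if_congr (hcond j hj) rfl rfl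
    _ = #{j ∈ range (a + 1) | a' ∣ j} := by rw [Finset.sum_boole]; simp
    _ = #{j ∈ insert 0 (Ioc 0 a) | a' ∣ j} := by
        congr 1
        ext j
        simp only [mem_filter, mem_range, mem_insert, mem_Ioc]
        omega
    _ = d + 1 := by
        rw [Finset.filter_insert, if_pos (dvd_zero a')]
        rw [Finset.card_insert_of_notMem (by simp)]
        rw [Nat.Ioc_filter_dvd_card_eq_div]
        have : a / a' = d := Nat.div_div_self (Nat.gcd_dvd_left a b) (by omega)
        omega

private lemma E_bound5 (x a b : ℕ) (hx : 1 ≤ x) (ha : 1 ≤ a) :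
    (∑ j ∈ range (a + 1), x ^ (b * (a - j) % a)) ≤ 2 + (a - 1) * x ^ (a - 1) := by
  obtain ⟨c, rfl⟩ : ∃ c, a = c + 1 := ⟨a - 1, by omega⟩
  rw [Finset.sum_range_succ, Finset.sum_range_succ']
  have hmid : (∑ i ∈ range c, x ^ (b * (c + 1 - (i + 1)) % (c + 1))) ≤ c * x ^ c := by
    calc (∑ i ∈ range c, x ^ (b * (c + 1 - (i + 1)) % (c + 1)))
        ≤ ∑ _i ∈ range c, x ^ c := by
          refine Finset.sum_le_sum fun i _ => Nat.pow_le_pow_right hx ?_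
          exact Nat.le_of_lt_succ (Nat.mod_lt _ (by omega))
      _ = c * x ^ c := by rw [Finset.sum_const, card_range, smul_eq_mul]
  have h0 : x ^ (b * (c + 1 - 0) % (c + 1)) = 1 := by
    rw [Nat.sub_zero, Nat.mul_mod_left, pow_zero]
  have hlast : x ^ (b * (c + 1 - (c + 1)) % (c + 1)) = 1 := by
    simp
  rw [h0, hlast]
  simp only [Nat.add_sub_cancel]
  omega
theorem gcd_div_mod_base5 (a b : ℕ) (ha : 1 ≤ a) (hb : 1 ≤ b) :
    Nat.gcd a b =
      (5 ^ (a * b * (a * b + a + b)) / ((5 ^ (a ^ 2 * b) - 1) * (5 ^ (a * b ^ 2) - 1)))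
          % 5 ^ (a * b) - 1 := by
  have hab : 1 ≤ a * b := Nat.one_le_iff_ne_zero.mpr (by positivity)
  set x : ℕ := 5 ^ (a * b) with hxdef
  have hx5 : 5 ≤ x := Nat.le_self_pow (by omega) 5
  have hxa4 : a + 4 ≤ x :=
    le_trans (add_four_le_pow5 a ha)
      (Nat.pow_le_pow_right (by norm_num) (Nat.le_mul_of_pos_right a hb))
  have h1a : 1 ≤ x ^ a := Nat.one_le_pow _ _ (by omega)
  have h1b : 1 ≤ x ^ b := Nat.one_le_pow _ _ (by omega)
  have ePa : (5 : ℕ) ^ (a ^ 2 * b) = x ^ a := by rw [hxdef, ← pow_mul]; congr 1; ring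
  have ePb : (5 : ℕ) ^ (a * b ^ 2) = x ^ b := by rw [hxdef, ← pow_mul]; congr 1; ring
  have eP : (5 : ℕ) ^ (a * b * (a * b + a + b)) = x ^ (a * b + a + b) := by
    rw [hxdef, ← pow_mul]
  rw [ePa, ePb, eP]
  set Q : ℕ := ∑ j ∈ range (a + 1), ∑ i ∈ range (b * (a - j) / a + 1), x ^ (b * (a - j) - a * i)
    with hQdef
  set E : ℕ := ∑ j ∈ range (a + 1), x ^ (b * (a - j) % a) with hEdef
  have hQz : (Q : ℤ) = ∑ j ∈ range (a + 1), ∑ i ∈ range (b * (a - j) / a + 1),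
      (x : ℤ) ^ (b * (a - j) - a * i) := by rw [hQdef]; push_cast; ring
  have hEz : (E : ℤ) = ∑ j ∈ range (a + 1), (x : ℤ) ^ (b * (a - j) % a) := by
    rw [hEdef]; push_cast; ring
  have keyZ : ((x : ℤ) ^ a - 1) * ((x : ℤ) ^ b - 1) * (Q : ℤ)
      + ((x : ℤ) ^ b - 1) * (E : ℤ) + (x : ℤ) ^ a = (x : ℤ) ^ (a * b + a + b) := by
    rw [hQz, hEz]; exact key_id5 _ a b
  have hE : E ≤ 2 + (a - 1) * x ^ (a - 1) := E_bound5 x a b (by omega) ha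
  -- the remainder bound, over ℤ
  have hA1 : (1 : ℤ) ≤ (a : ℤ) := by exact_mod_cast ha
  have hx5' : (5 : ℤ) ≤ (x : ℤ) := by exact_mod_cast hx5
  have hxa4' : (a : ℤ) + 4 ≤ (x : ℤ) := by exact_mod_cast hxa4
  have hYx : (x : ℤ) ≤ (x : ℤ) ^ b := by exact_mod_cast Nat.le_self_pow (by omega) x
  have hXc1 : (1 : ℤ) ≤ (x : ℤ) ^ (a - 1) := by
    exact_mod_cast Nat.one_le_pow _ _ (by omega)
  have hE' : (E : ℤ) ≤ 2 + ((a : ℤ) - 1) * (x : ℤ) ^ (a - 1) := by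
    zify [ha] at hE; exact hE
  have hEnn : (0 : ℤ) ≤ (E : ℤ) := by positivity
  have hxa' : (x : ℤ) ^ a = (x : ℤ) * (x : ℤ) ^ (a - 1) := by
    conv_lhs => rw [show a = (a - 1) + 1 by omega]
    rw [pow_succ']
  have hRlt : (x : ℤ) ^ a + ((x : ℤ) ^ b - 1) * (E : ℤ)
      < ((x : ℤ) ^ a - 1) * ((x : ℤ) ^ b - 1) := by
    rw [hxa']
    exact R_bound5 _ _ _ _ _ hx5' hA1 hxa4' hXc1 hYx hEnn hE'
  have hlo : Q * ((x ^ a - 1) * (x ^ b - 1)) ≤ x ^ (a * b + a + b) := by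
    zify [h1a, h1b]
    have hp : (0 : ℤ) < (x : ℤ) ^ a := by positivity
    linarith [keyZ, mul_nonneg (show (0 : ℤ) ≤ (x : ℤ) ^ b - 1 by linarith) hEnn]
  have hhi : x ^ (a * b + a + b) < (Q + 1) * ((x ^ a - 1) * (x ^ b - 1)) := by
    zify [h1a, h1b]
    linarith [keyZ, hRlt]
  rw [Nat.div_eq_of_lt_le hlo hhi]
  have hgl : Nat.gcd a b ≤ a := Nat.le_of_dvd (by omega) (Nat.gcd_dvd_left a b)
  have hQmod : Q % x = Nat.gcd a b + 1 := by
    rw [hQdef, Finset.sum_nat_mod]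
    rw [Finset.sum_congr rfl fun j _ => inner_mod x a (by omega) ha (b * (a - j))]
    rw [count_dvd5 a b ha hb]
    exact Nat.mod_eq_of_lt (by omega)
  rw [hQmod]
  omega
end

section
/- For all natural numbers a, b ≥ 1, gcd(a,b) = ((((−5^(ab(ab+a+b))) mod ((5^(a²b) − 1)(5^(ab²) − 1))) mod 5^(ab)) − 2, where the computation is carried out in the integers and x mod y denotes the unique representative in [0, y) for y > 0. -/
/-!
Put `q = 5 ^ (a * b)`, `g = gcd a b` and `M = (q ^ a - 1) * (q ^ b - 1)`. As `j` runs over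
`0, …, a - 1`, the residues `b * j % a` run `g` times over the multiples of `g` below `a`, so
`∑_{j < a} q ^ (b * j) ≡ g * (q ^ a - 1) / (q ^ g - 1)` modulo `q ^ a - 1`. Multiplying by
`q ^ b - 1` gives `q ^ (a * b) ≡ 1 + g * M / (q ^ g - 1)` modulo `M`, and since `q ^ g - 1`
divides `q ^ (a + b) - 1`, we get
`-q ^ (a * b + a + b) ≡ 2 * M - q ^ (a + b) - g * M / (q ^ g - 1)` modulo `M`. For `q ≥ 5` this
representative lies in `[0, M)`, and it is `≡ g + 2` modulo `q`.
-/

open Finset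

section AddCommMonoid

variable {M : Type*} [AddCommMonoid M]

theorem Function.Periodic.sum_range_mul {f : ℕ → M} {c : ℕ} (hf : Function.Periodic f c)
    (n : ℕ) :
    ∑ j ∈ range (n * c), f j = n • ∑ j ∈ range c, f j := by
  induction n with
  | zero => simp
  | succ n ih =>
    rw [Nat.succ_mul, sum_range_add, ih, succ_nsmul]
    congr 1
    refine sum_congr rfl fun j _ ↦ ?_
    rw [add_comm]
    exact hf.nat_mul n j

theorem Nat.Coprime.sum_range_mul_mod {a b : ℕ} (h : Nat.Coprime a b) (f : ℕ → M) :
    ∑ j ∈ range a, f (b * j % a) = ∑ j ∈ range a, f j := by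
  have hmaps : Set.MapsTo (fun j ↦ b * j % a) (range a) (range a) := fun j hj ↦
    mem_range.2 (Nat.mod_lt _ (pos_of_ne_zero (by rintro rfl; simp at hj)))
  have hinj : Set.InjOn (fun j ↦ b * j % a) (range a) := fun x hx y hy hxy ↦
    (Nat.ModEq.cancel_left_of_coprime h hxy).eq_of_lt_of_lt (mem_range.1 hx) (mem_range.1 hy)
  exact sum_nbij _ hmaps hinj (surjOn_of_injOn_of_card_le _ hmaps hinj le_rfl) fun _ _ ↦ rfl

theorem Finset.sum_range_mul_mod (f : ℕ → M) (a b : ℕ) :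
    ∑ j ∈ range a, f (b * j % a)
      = a.gcd b • ∑ i ∈ range (a / a.gcd b), f (a.gcd b * i) := by
  rcases Nat.eq_zero_or_pos a with rfl | ha
  · simp
  have hg0 := Nat.gcd_pos_of_pos_left b ha
  have hcop := Nat.coprime_div_gcd_div_gcd hg0
  generalize hg : a.gcd b = g at hg0 hcop ⊢
  obtain ⟨α, rfl⟩ : g ∣ a := hg ▸ Nat.gcd_dvd_left a b
  obtain ⟨β, rfl⟩ : g ∣ b := hg ▸ Nat.gcd_dvd_right _ b
  simp only [Nat.mul_div_cancel_left _ hg0] at hcop ⊢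
  have hper : Function.Periodic (fun j ↦ f (g * (β * j % α))) α := fun j ↦ by
    simp only [Nat.mul_add, Nat.add_mul_mod_self_right]
  calc ∑ j ∈ range (g * α), f (g * β * j % (g * α))
      = ∑ j ∈ range (g * α), f (g * (β * j % α)) := by
        simp only [mul_assoc, Nat.mul_mod_mul_left]
    _ = g • ∑ j ∈ range α, f (g * (β * j % α)) := hper.sum_range_mul g
    _ = g • ∑ i ∈ range α, f (g * i) := by rw [hcop.sum_range_mul_mod (fun i ↦ f (g * i))]

end AddCommMonoid

section CommRing

variable {R : Type*} [CommRing R]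

theorem pow_sub_one_dvd_pow_sub_pow_mod (x : R) (n a : ℕ) :
    x ^ a - 1 ∣ x ^ n - x ^ (n % a) := by
  have h : x ^ n - x ^ (n % a) = (x ^ (a * (n / a)) - 1) * x ^ (n % a) := by
    rw [sub_mul, one_mul, ← pow_add, Nat.div_add_mod]
  rw [h]
  exact (pow_one_sub_dvd_pow_mul_sub_one x a (n / a)).mul_right _

theorem pow_sub_one_dvd_sum_pow_mul_sub (x : R) (a b : ℕ) :
    x ^ a - 1 ∣ ∑ j ∈ range a, x ^ (b * j)
      - a.gcd b * ∑ i ∈ range (a / a.gcd b), x ^ (a.gcd b * i) := by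
  rw [← nsmul_eq_mul, ← sum_range_mul_mod, ← sum_sub_distrib]
  exact dvd_sum fun j _ ↦ pow_sub_one_dvd_pow_sub_pow_mod x _ _

theorem geom_sum_pow_gcd_mul (q : R) (a b : ℕ) :
    (∑ i ∈ range (a / a.gcd b), q ^ (a.gcd b * i)) * (q ^ a.gcd b - 1) = q ^ a - 1 := by
  simp only [pow_mul]
  rw [geom_sum_mul, ← pow_mul, Nat.mul_div_cancel' (Nat.gcd_dvd_left a b)]

/-- For `q ≥ 5` and `a, b ≠ 0`, the least nonnegative residue of `-q ^ (a * b + a + b)` modulo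
`(q ^ a - 1) * (q ^ b - 1)`; the sum is `(q ^ a - 1) / (q ^ gcd a b - 1)`. -/
def negPowResidue (q : R) (a b : ℕ) : R :=
  2 * ((q ^ a - 1) * (q ^ b - 1)) - q ^ (a + b)
    - a.gcd b * ((q ^ b - 1) * ∑ i ∈ range (a / a.gcd b), q ^ (a.gcd b * i))

theorem pow_sub_one_mul_pow_sub_one_dvd_negPowResidue_add (q : R) (a b : ℕ) :
    (q ^ a - 1) * (q ^ b - 1) ∣ negPowResidue q a b + q ^ (a * b + a + b) := by
  set g := a.gcd b
  set E := ∑ i ∈ range (a / g), q ^ (g * i)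
  have hab : (q ^ a - 1) * (q ^ b - 1) ∣ q ^ (a * b) - 1 - g * ((q ^ b - 1) * E) := by
    have hpow : q ^ (a * b) - 1 = (∑ j ∈ range a, q ^ (b * j)) * (q ^ b - 1) := by
      simp only [pow_mul]
      rw [geom_sum_mul, ← pow_mul, ← pow_mul, mul_comm]
    rw [hpow, show ∀ S : R,
      S * (q ^ b - 1) - g * ((q ^ b - 1) * E) = (S - g * E) * (q ^ b - 1) from fun S ↦ by ring]
    exact mul_dvd_mul (pow_sub_one_dvd_sum_pow_mul_sub q a b) dvd_rfl
  have hsum : (q ^ a - 1) * (q ^ b - 1) ∣ (q ^ b - 1) * E * (q ^ (a + b) - 1) := by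
    rw [← geom_sum_pow_gcd_mul q a b,
      show E * (q ^ g - 1) * (q ^ b - 1) = (q ^ b - 1) * E * (q ^ g - 1) by ring]
    exact mul_dvd_mul_left _ <|
      dvd_pow_sub_one_of_dvd (Nat.dvd_add (Nat.gcd_dvd_left a b) (Nat.gcd_dvd_right a b))
  rw [negPowResidue, show 2 * ((q ^ a - 1) * (q ^ b - 1)) - q ^ (a + b) - g * ((q ^ b - 1) * E)
      + q ^ (a * b + a + b) = q ^ (a + b) * (q ^ (a * b) - 1 - g * ((q ^ b - 1) * E))
        + g * ((q ^ b - 1) * E * (q ^ (a + b) - 1)) + (q ^ a - 1) * (q ^ b - 1) * 2 by ring]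
  exact dvd_add (dvd_add (hab.mul_left _) (hsum.mul_left _)) (dvd_mul_right _ _)

theorem dvd_sum_range_pow_mul_sub_one (q : R) {g n : ℕ} (hg : g ≠ 0) (hn : n ≠ 0) :
    q ∣ ∑ i ∈ range n, q ^ (g * i) - 1 := by
  obtain ⟨n, rfl⟩ := Nat.exists_eq_succ_of_ne_zero hn
  rw [sum_range_succ', mul_zero, pow_zero, add_sub_cancel_right]
  exact dvd_sum fun i _ ↦ dvd_pow_self q (mul_ne_zero hg i.succ_ne_zero)

theorem dvd_negPowResidue_sub (q : R) {a b : ℕ} (ha : a ≠ 0) (hb : b ≠ 0) :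
    q ∣ negPowResidue q a b - (a.gcd b + 2) := by
  set g := a.gcd b
  set E := ∑ i ∈ range (a / g), q ^ (g * i)
  have hg : g ≠ 0 := Nat.gcd_ne_zero_left ha
  have hqa : q ∣ q ^ a := dvd_pow_self q ha
  have hqb : q ∣ q ^ b := dvd_pow_self q hb
  have hE : q ∣ E - 1 := dvd_sum_range_pow_mul_sub_one q hg
    (Nat.div_pos (Nat.gcd_le_left b (Nat.pos_of_ne_zero ha)) (Nat.pos_of_ne_zero hg)).ne'
  rw [negPowResidue, show 2 * ((q ^ a - 1) * (q ^ b - 1)) - q ^ (a + b) - g * ((q ^ b - 1) * E)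
      - (g + 2) = q ^ a * q ^ b - 2 * q ^ a - 2 * q ^ b - g * (q ^ b - 1) * (E - 1) - g * q ^ b by
    ring]
  exact ((((hqa.mul_right _).sub (hqa.mul_left 2)).sub (hqb.mul_left 2)).sub (hE.mul_left _)).sub
    (hqb.mul_left _)

end CommRing

theorem four_mul_add_one_le_five_pow (n : ℕ) : 4 * (n : ℤ) + 1 ≤ 5 ^ n := by
  have := one_add_mul_le_pow (a := (4 : ℤ)) (by norm_num) n
  norm_num at this
  linarith

theorem negPowResidue_mem_Ico {q : ℤ} (hq : 5 ≤ q) {a b : ℕ} (ha : a ≠ 0) (hb : b ≠ 0) :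
    negPowResidue q a b ∈ Set.Ico 0 ((q ^ a - 1) * (q ^ b - 1)) := by
  have hE := geom_sum_pow_gcd_mul q a b
  have hg : (0 : ℤ) < a.gcd b := mod_cast Nat.gcd_pos_of_pos_left b (Nat.pos_of_ne_zero ha)
  have hx : 5 ≤ q ^ a := hq.trans (le_self_pow₀ (by linarith) ha)
  have hy : 5 ≤ q ^ b := hq.trans (le_self_pow₀ (by linarith) hb)
  have hz : 4 * (a.gcd b : ℤ) + 1 ≤ q ^ a.gcd b :=
    (four_mul_add_one_le_five_pow _).trans (pow_le_pow_left₀ (by norm_num) hq _)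
  have hz1 : 0 < q ^ a.gcd b - 1 := by linarith
  have hE0 : 0 < ∑ i ∈ range (a / a.gcd b), q ^ (a.gcd b * i) :=
    pos_of_mul_pos_left (by linarith) hz1.le
  rw [negPowResidue, pow_add]
  generalize q ^ a = x, q ^ b = y, q ^ a.gcd b = z,
    ∑ i ∈ range (a / a.gcd b), q ^ (a.gcd b * i) = E, ((a.gcd b : ℕ) : ℤ) = g at *
  constructor
  · refine nonneg_of_mul_nonneg_left ?_ hz1
    rw [show (2 * ((x - 1) * (y - 1)) - x * y - g * ((y - 1) * E)) * (z - 1)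
        = (x * y - 2 * x - 2 * y + 2) * (z - 1 - 4 * g) + g * (3 * x * y - 7 * x - 7 * y + 7) by
      linear_combination (-g * (y - 1)) * hE]
    exact add_nonneg (mul_nonneg (by nlinarith) (by linarith)) (mul_nonneg hg.le (by nlinarith))
  · have : 0 ≤ g * ((y - 1) * E) := mul_nonneg hg.le (mul_nonneg (by linarith) hE0.le)
    linear_combination this + hx + hy

theorem Int.neg_pow_emod_eq_negPowResidue {q : ℤ} (hq : 5 ≤ q) {a b : ℕ} (ha : a ≠ 0)
    (hb : b ≠ 0) : -q ^ (a * b + a + b) % ((q ^ a - 1) * (q ^ b - 1)) = negPowResidue q a b := by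
  obtain ⟨h0, hlt⟩ := negPowResidue_mem_Ico hq ha hb
  have hmod : -q ^ (a * b + a + b) ≡ negPowResidue q a b [ZMOD (q ^ a - 1) * (q ^ b - 1)] :=
    Int.modEq_iff_dvd.2 <| by
      rw [sub_neg_eq_add]
      exact pow_sub_one_mul_pow_sub_one_dvd_negPowResidue_add q a b
  exact Eq.trans hmod (Int.emod_eq_of_lt h0 hlt)

theorem gcd_mod_mod_base5 (a b : ℕ) (ha : 1 ≤ a) (hb : 1 ≤ b) :
    (Nat.gcd a b : ℤ) =
      ((-(5 : ℤ) ^ (a * b * (a * b + a + b)))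
          % (((5 : ℤ) ^ (a ^ 2 * b) - 1) * ((5 : ℤ) ^ (a * b ^ 2) - 1)))
        % (5 : ℤ) ^ (a * b) - 2 := by
  have ha0 : a ≠ 0 := Nat.one_le_iff_ne_zero.mp ha
  have hb0 : b ≠ 0 := Nat.one_le_iff_ne_zero.mp hb
  have hq : (5 : ℤ) ≤ 5 ^ (a * b) := le_self_pow₀ (by norm_num) (mul_ne_zero ha0 hb0)
  rw [show a ^ 2 * b = a * b * a by ring, show a * b ^ 2 = a * b * b by ring,
    pow_mul _ (a * b) a, pow_mul _ (a * b) b, pow_mul _ (a * b),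
    Int.neg_pow_emod_eq_negPowResidue hq ha0 hb0]
  have hgq : (a.gcd b : ℤ) + 2 < 5 ^ (a * b) := by
    have hg : (1 : ℤ) ≤ a.gcd b := mod_cast Nat.gcd_pos_of_pos_left b ha
    have hgab : (a.gcd b : ℤ) ≤ (a * b : ℕ) :=
      mod_cast (Nat.gcd_le_left b ha).trans (Nat.le_mul_of_pos_right a hb)
    linarith [four_mul_add_one_le_five_pow (a * b)]
  have hres : negPowResidue ((5 : ℤ) ^ (a * b)) a b % 5 ^ (a * b) = a.gcd b + 2 :=
    Eq.trans (Int.modEq_iff_dvd.2 (dvd_negPowResidue_sub ((5 : ℤ) ^ (a * b)) ha0 hb0)).symm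
      (Int.emod_eq_of_lt (by positivity) hgq)
  rw [hres, add_sub_cancel_right]
end

section
/- For all natural numbers a, b ≥ 1 with (a,b) ≠ (1,1), gcd(a,b) = (⌊2^(ab(ab+a+b)) / ((2^(a²b) − 1)(2^(ab²) − 1))⌋ mod 2^(ab)) − 1. -/
/-!
Put `B = 2 ^ (a * b)`. Expanding `1 / ((B ^ a - 1) * (B ^ b - 1))` into geometric series shows
that the quotient of `B ^ (a * b + a + b)` by `(B ^ a - 1) * (B ^ b - 1)` is
`∑_{i ≤ b} ∑_{b j ≤ a i} B ^ (a i - b j)`, the remainder being small once `b + 5 ≤ B`, which holds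
for `a ≤ b` except at `(a, b) = (1, 2)`. Modulo `B` only the terms with `a i = b j` survive, and
there are `gcd a b + 1` of them.
-/

open Finset

lemma Nat.dvd_mul_iff_div_gcd_dvd (a : ℕ) {b : ℕ} (hb : 0 < b) (i : ℕ) :
    b ∣ a * i ↔ b / a.gcd b ∣ i := by
  have hg : 0 < a.gcd b := Nat.gcd_pos_of_pos_right a hb
  have hcop : (b / a.gcd b).Coprime (a / a.gcd b) := (Nat.coprime_div_gcd_div_gcd hg).symm
  calc b ∣ a * i ↔ b / a.gcd b * a.gcd b ∣ a / a.gcd b * i * a.gcd b := by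
        rw [Nat.div_mul_cancel (Nat.gcd_dvd_right a b), mul_right_comm,
          Nat.div_mul_cancel (Nat.gcd_dvd_left a b)]
    _ ↔ b / a.gcd b ∣ a / a.gcd b * i := Nat.mul_dvd_mul_iff_right hg
    _ ↔ b / a.gcd b ∣ i := hcop.dvd_mul_left

lemma Nat.card_filter_range_succ_dvd_mul (a : ℕ) {b : ℕ} (hb : 0 < b) :
    #{i ∈ range (b + 1) | b ∣ a * i} = a.gcd b + 1 := by
  have hrange : range (b + 1) = insert 0 (Ioc 0 b) := by
    ext i; simp only [mem_range, mem_insert, mem_Ioc]; omega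
  simp only [Nat.dvd_mul_iff_div_gcd_dvd a hb]
  rw [hrange, filter_insert, if_pos (dvd_zero _), card_insert_of_notMem (by simp),
    Nat.Ioc_filter_dvd_card_eq_div, Nat.div_div_self (Nat.gcd_dvd_right a b) hb.ne']

lemma Nat.add_five_le_two_pow {n : ℕ} (hn : 3 ≤ n) : n + 5 ≤ 2 ^ n := by
  induction n, hn using Nat.le_induction with
  | base => norm_num
  | succ n _ ih => rw [pow_succ]; omega

section

variable {R : Type*}

/-- `∑_{i ≤ b} ∑_{b j ≤ a i} x ^ (a i - b j)`, the inner sum indexed by `k = a i / b - j`. -/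
def quotSum [CommSemiring R] (x : R) (a b : ℕ) : R :=
  ∑ i ∈ range (b + 1), x ^ (a * i % b) * ∑ k ∈ range (a * i / b + 1), (x ^ b) ^ k

def residueSum [CommSemiring R] (x : R) (a b : ℕ) : R :=
  ∑ i ∈ range (b + 1), x ^ (a * i % b)

@[simp, norm_cast]
lemma Nat.cast_quotSum [CommSemiring R] (B a b : ℕ) :
    ((quotSum B a b : ℕ) : R) = quotSum (B : R) a b := by
  simp [quotSum]

@[simp, norm_cast]
lemma Nat.cast_residueSum [CommSemiring R] (B a b : ℕ) :
    ((residueSum B a b : ℕ) : R) = residueSum (B : R) a b := by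
  simp [residueSum]

lemma pow_mod_mul_geom_sum_mul [CommRing R] (x : R) (n b : ℕ) :
    x ^ (n % b) * (∑ k ∈ range (n / b + 1), (x ^ b) ^ k) * (x ^ b - 1) =
      x ^ (n + b) - x ^ (n % b) := by
  rw [mul_assoc, geom_sum_mul, mul_sub, mul_one, ← pow_mul, ← pow_add, mul_add, mul_one,
    ← add_assoc, Nat.mod_add_div]

lemma quotSum_mul_add_residueSum [CommRing R] (x : R) (a b : ℕ) :
    (x ^ a - 1) * (x ^ b - 1) * quotSum x a b + (x ^ b + (x ^ a - 1) * residueSum x a b) =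
      x ^ (a * b + a + b) := by
  have h : (x ^ b - 1) * quotSum x a b =
      x ^ b * ∑ i ∈ range (b + 1), (x ^ a) ^ i - residueSum x a b := by
    rw [quotSum, residueSum, mul_sum (range (b + 1)), mul_sum (range (b + 1)), ← sum_sub_distrib]
    refine sum_congr rfl fun i _ => ?_
    rw [mul_comm, pow_mod_mul_geom_sum_mul]
    ring
  calc _ = x ^ b * ((∑ i ∈ range (b + 1), (x ^ a) ^ i) * (x ^ a - 1)) + x ^ b := by
        rw [mul_assoc, h]; ring
    _ = x ^ (a * b + a + b) := by rw [geom_sum_mul]; ring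

lemma quotSum_zero [CommSemiring R] (a : ℕ) {b : ℕ} (hb : b ≠ 0) :
    quotSum (0 : R) a b = #{i ∈ range (b + 1) | b ∣ a * i} := by
  simp [quotSum, zero_pow hb, zero_pow_eq, Nat.dvd_iff_mod_eq_zero]

end

lemma residueSum_le {B : ℕ} (hB : 0 < B) (a : ℕ) {b : ℕ} (hb : 0 < b) :
    residueSum B a b ≤ (b + 1) * B ^ (b - 1) := by
  calc residueSum B a b ≤ ∑ _i ∈ range (b + 1), B ^ (b - 1) :=
        sum_le_sum fun i _ => Nat.pow_le_pow_right hB (Nat.le_sub_one_of_lt (Nat.mod_lt _ hb))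
    _ = (b + 1) * B ^ (b - 1) := by rw [sum_const, card_range, smul_eq_mul]

lemma pow_add_residueSum_lt {B a b : ℕ} (ha : 0 < a) (hb : 0 < b) (hB : b + 5 ≤ B) :
    B ^ b + (B ^ a - 1) * residueSum B a b < (B ^ a - 1) * (B ^ b - 1) := by
  have hE := Nat.mul_le_mul_left (B ^ a - 1) (residueSum_le (by omega : 0 < B) a hb)
  have hXB : B - 1 ≤ B ^ a - 1 := Nat.sub_le_sub_right (Nat.le_self_pow ha.ne' B) 1
  have hy : 1 ≤ B ^ (b - 1) := Nat.one_le_pow _ _ (by omega)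
  have hBb : B ^ b = B ^ (b - 1) * B := by rw [← pow_succ, Nat.sub_add_cancel hb]
  rw [hBb]
  generalize B ^ a - 1 = X at *
  generalize B ^ (b - 1) = y at *
  generalize residueSum B a b = E at *
  zify [(by nlinarith : 1 ≤ y * B), (by omega : 1 ≤ B)] at *
  -- `X * (y * B - 1) - X * E ≥ X * ((B - b - 1) * y - 1) ≥ (B - 1) * (4 * y - 1) > y * B`
  nlinarith [mul_le_mul_of_nonneg_right hXB (by linarith : (0 : ℤ) ≤ 4 * y - 1),
    mul_nonneg (by linarith : (0 : ℤ) ≤ X)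
      (mul_nonneg (by linarith : (0 : ℤ) ≤ B - b - 5) (by linarith : (0 : ℤ) ≤ y))]

lemma pow_div_eq_quotSum {B a b : ℕ} (ha : 0 < a) (hb : 0 < b) (hB : b + 5 ≤ B) :
    B ^ (a * b + a + b) / ((B ^ a - 1) * (B ^ b - 1)) = quotSum B a b := by
  have hB1 : 1 ≤ B := by omega
  have hid : (B ^ a - 1) * (B ^ b - 1) * quotSum B a b + (B ^ b + (B ^ a - 1) * residueSum B a b) =
      B ^ (a * b + a + b) := by
    have := quotSum_mul_add_residueSum (B : ℤ) a b
    zify [Nat.one_le_pow a B hB1, Nat.one_le_pow b B hB1]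
    exact this
  have hlt := pow_add_residueSum_lt ha hb hB
  rw [← hid, add_comm, Nat.add_mul_div_left _ _ (by omega), Nat.div_eq_of_lt hlt, zero_add]

lemma quotSum_mod_self (B a : ℕ) {b : ℕ} (hb : 0 < b) :
    quotSum B a b % B = (a.gcd b + 1) % B := by
  rw [← ZMod.natCast_eq_natCast_iff', ← Nat.card_filter_range_succ_dvd_mul a hb,
    ← quotSum_zero a hb.ne', Nat.cast_quotSum, ZMod.natCast_self]

theorem pow_div_mod_eq_gcd_add_one {B a b : ℕ} (ha : 0 < a) (hb : 0 < b) (hB : b + 5 ≤ B) :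
    B ^ (a * b + a + b) / ((B ^ a - 1) * (B ^ b - 1)) % B = a.gcd b + 1 := by
  rw [pow_div_eq_quotSum ha hb hB, quotSum_mod_self B a hb, Nat.mod_eq_of_lt]
  have := Nat.gcd_le_right a hb
  omega

theorem gcd_div_mod_base2 (a b : ℕ) (ha : 1 ≤ a) (hb : 1 ≤ b) (hab : (a, b) ≠ (1, 1)) :
    Nat.gcd a b =
      (2 ^ (a * b * (a * b + a + b)) / ((2 ^ (a ^ 2 * b) - 1) * (2 ^ (a * b ^ 2) - 1)))
          % 2 ^ (a * b) - 1 := by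
  wlog hle : a ≤ b generalizing a b
  · rw [Nat.gcd_comm, this b a hb ha (by simpa [and_comm] using hab) (by omega)]
    ring_nf
  rcases lt_or_ge (a * b) 3 with hsmall | hlarge
  · obtain rfl : a = 1 := by nlinarith
    obtain rfl : b = 2 := by simp only [ne_eq, Prod.mk.injEq, true_and] at hab; omega
    norm_num
  · have hB : b + 5 ≤ 2 ^ (a * b) := le_trans (by nlinarith) (Nat.add_five_le_two_pow hlarge)
    have := pow_div_mod_eq_gcd_add_one ha hb hB
    simp only [← pow_mul] at this
    rw [show a ^ 2 * b = a * b * a by ring, show a * b ^ 2 = a * b * b by ring, this]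
    simp
end

section
/- For all natural numbers a, b ≥ 1 with (a,b) ≠ (1,1), gcd(a,b) = (((−2^(ab(ab+a+b))) mod ((2^(a²b) − 1)(2^(ab²) − 1))) mod 2^(ab)) − 2, where the computation is carried out in the integers and x mod y denotes the unique representative in [0, y) for y > 0. -/
/-!
Put x = 2^(ab), g = gcd(a,b) and S = ∑_{m < b/g} x^(gm) = (x^b - 1)/(x^g - 1).
Modulo x^b - 1 the exponents a·k, k < b, only matter mod b, where they run g times through the
multiples of g; so x^(a+b) ∑_{k<b} x^(ak) ≡ gS. Multiplying by x^a - 1 turns this into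
x^(ab+a+b) ≡ x^(a+b) + (x^a - 1)gS modulo (x^a - 1)(x^b - 1). Since 2g ≤ x^g - 1, the number
2(x^a - 1)(x^b - 1) - x^(a+b) - (x^a - 1)gS lies in [0, (x^a - 1)(x^b - 1)), so it is the first
remainder, and it is ≡ g + 2 modulo x. The size estimates need x ≥ 8, i.e. ab ≥ 3; the
cases (a, b) = (1, 2), (2, 1) are checked numerically.
-/

open Finset

theorem sum_range_pow_mul_of_coprime {R : Type*} [Semiring R] {z : R} {c n : ℕ}
    (hz : z ^ n = 1) (hc : c.Coprime n) :
    ∑ k ∈ range n, z ^ (c * k) = ∑ k ∈ range n, z ^ k := by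
  rcases n.eq_zero_or_pos with rfl | hn
  · simp
  have hmaps : Set.MapsTo (fun k ↦ c * k % n) (range n) (range n) :=
    fun k _ ↦ mem_range.mpr (Nat.mod_lt _ hn)
  have hinj : Set.InjOn (fun k ↦ c * k % n) (range n) := fun k hk l hl hkl ↦
    (Nat.ModEq.cancel_left_of_coprime (Nat.coprime_comm.mp hc) hkl).eq_of_lt_of_lt
      (mem_range.mp hk) (mem_range.mp hl)
  calc ∑ k ∈ range n, z ^ (c * k) = ∑ k ∈ range n, z ^ (c * k % n) := by
        simp_rw [← pow_eq_pow_mod _ hz]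
    _ = ∑ k ∈ range n, z ^ k :=
        sum_nbij _ hmaps hinj (surjOn_of_injOn_of_card_le _ hmaps hinj le_rfl) fun _ _ ↦ rfl

theorem geom_sum_mul_eq_nsmul_of_pow_eq_one {R : Type*} [Semiring R] {w : R} {p : ℕ}
    (hw : w ^ p = 1) (q : ℕ) :
    ∑ k ∈ range (q * p), w ^ k = q • ∑ k ∈ range p, w ^ k := by
  induction q with
  | zero => simp
  | succ q ih =>
    simp_rw [Nat.succ_mul, sum_range_add, ih, pow_add, pow_mul', hw, one_pow, one_mul,
      succ_nsmul]

theorem sum_range_pow_mul_eq_gcd_nsmul {R : Type*} [Semiring R] {y : R} {a b : ℕ}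
    (hb : 0 < b) (hy : y ^ b = 1) :
    ∑ k ∈ range b, y ^ (a * k) =
      a.gcd b • ∑ m ∈ range (b / a.gcd b), y ^ (a.gcd b * m) := by
  obtain ⟨a', b', hcop, ha, hb'⟩ := Nat.exists_coprime a b
  set g := a.gcd b
  have hg : 0 < g := Nat.gcd_pos_of_pos_right a hb
  have hdiv : b / g = b' := by rw [hb', Nat.mul_div_cancel _ hg]
  have hz : (y ^ g) ^ b' = 1 := by rw [← pow_mul, mul_comm, ← hb', hy]
  have hya : y ^ a = (y ^ g) ^ a' := by rw [ha, mul_comm, pow_mul]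
  have hw : (y ^ a) ^ b' = 1 := by rw [hya, pow_right_comm, hz, one_pow]
  calc ∑ k ∈ range b, y ^ (a * k) = ∑ k ∈ range (g * b'), (y ^ a) ^ k := by
        simp_rw [hb', mul_comm b', pow_mul]
    _ = g • ∑ k ∈ range b', ((y ^ g) ^ a') ^ k := by
        rw [geom_sum_mul_eq_nsmul_of_pow_eq_one hw, hya]
    _ = g • ∑ m ∈ range (b / g), y ^ (g * m) := by
        simp_rw [← pow_mul (y ^ g) a', sum_range_pow_mul_of_coprime hz hcop, hdiv, pow_mul]

theorem pow_add_mul_geom_sum_eq_gcd_nsmul {R : Type*} [Ring R] {y : R} {a b : ℕ}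
    (hb : 0 < b) (hy : y ^ b = 1) :
    y ^ (a + b) * ∑ k ∈ range b, y ^ (a * k) =
      a.gcd b • ∑ m ∈ range (b / a.gcd b), y ^ (a.gcd b * m) := by
  have hw : (y ^ a) ^ b = 1 := by rw [pow_right_comm, hy, one_pow]
  have hshift : y ^ a * ∑ k ∈ range b, (y ^ a) ^ k = ∑ k ∈ range b, (y ^ a) ^ k :=
    add_right_cancel (b := 1) (by rw [← geom_sum_succ, geom_sum_succ', hw, add_comm])
  rw [pow_add, hy, mul_one, ← sum_range_pow_mul_eq_gcd_nsmul hb hy]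
  simpa only [pow_mul] using hshift

theorem pow_sub_one_mul_pow_sub_one_dvd {R : Type*} [CommRing R] (x : R) {a b : ℕ} (hb : 0 < b) :
    (x ^ a - 1) * (x ^ b - 1) ∣ x ^ (a * b + a + b) - x ^ (a + b) -
      (x ^ a - 1) * a.gcd b • ∑ m ∈ range (b / a.gcd b), x ^ (a.gcd b * m) := by
  set u := ∑ k ∈ range b, x ^ (a * k)
  have hu : u * (x ^ a - 1) = x ^ (a * b) - 1 := by
    simpa only [← pow_mul] using geom_sum_mul (x ^ a) b
  have hB : x ^ b - 1 ∣ x ^ (a + b) * u -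
      a.gcd b • ∑ m ∈ range (b / a.gcd b), x ^ (a.gcd b * m) := by
    rw [← Ideal.Quotient.eq_zero_iff_dvd]
    have hy : Ideal.Quotient.mk (Ideal.span {x ^ b - 1}) x ^ b = 1 := by
      rw [← sub_eq_zero, ← map_pow, ← map_one (Ideal.Quotient.mk _), ← map_sub]
      exact Ideal.Quotient.mk_singleton_self _
    simp only [u, map_sub, map_mul, map_pow, map_sum, map_nsmul]
    rw [pow_add_mul_geom_sum_eq_gcd_nsmul hb hy, sub_self]
  convert mul_dvd_mul_left (x ^ a - 1) hB using 1
  linear_combination (-x ^ (a + b)) * hu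

theorem neg_pow_emod_emod_eq_gcd_add_two {x : ℤ} {a b : ℕ} (ha : 0 < a) (hb : 0 < b)
    (hx : 8 ≤ x) (hgx : (a.gcd b : ℤ) + 2 < x) :
    -x ^ (a * b + a + b) % ((x ^ a - 1) * (x ^ b - 1)) % x = a.gcd b + 2 := by
  set g := a.gcd b
  set S := ∑ m ∈ range (b / g), x ^ (g * m)
  have hg : 0 < g := Nat.gcd_pos_of_pos_left b ha
  have hS : (x ^ g - 1) * S = x ^ b - 1 := by
    rw [mul_comm, ← Nat.mul_div_cancel' (Nat.gcd_dvd_right a b), pow_mul]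
    simpa only [← pow_mul] using geom_sum_mul (x ^ g) (b / g)
  have hS0 : 0 ≤ S := sum_nonneg fun _ _ ↦ pow_nonneg (by linarith) _
  have hX : 8 ≤ x ^ a := hx.trans (le_self_pow₀ (by linarith) ha.ne')
  have hY : 8 ≤ x ^ b := hx.trans (le_self_pow₀ (by linarith) hb.ne')
  have h2g : 2 * (g : ℤ) ≤ x ^ g - 1 := by
    have hbern : 1 + (g : ℤ) * 7 ≤ (1 + 7) ^ g := one_add_mul_le_pow (by norm_num) g
    have hmono : (8 : ℤ) ^ g ≤ x ^ g := pow_le_pow_left₀ (by norm_num) hx g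
    norm_num at hbern
    linarith
  have hv : 2 * (g * S) ≤ x ^ b - 1 := by rw [← hS]; nlinarith
  set r := 2 * ((x ^ a - 1) * (x ^ b - 1)) - x ^ a * x ^ b - (x ^ a - 1) * (g * S) with hr
  have hA : 0 ≤ x ^ a - 1 := by linarith
  have hr0 : 0 ≤ r := by
    nlinarith [mul_le_mul_of_nonneg_left hv hA, mul_nonneg (sub_nonneg.mpr hX) (sub_nonneg.mpr hY)]
  have hrlt : r < (x ^ a - 1) * (x ^ b - 1) := by
    nlinarith [mul_nonneg hA (mul_nonneg (Nat.cast_nonneg g) hS0)]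
  have hmod : -x ^ (a * b + a + b) % ((x ^ a - 1) * (x ^ b - 1)) = r := by
    obtain ⟨q, hq⟩ := pow_sub_one_mul_pow_sub_one_dvd x (a := a) hb
    rw [nsmul_eq_mul] at hq
    rw [show -x ^ (a * b + a + b) = r + (x ^ a - 1) * (x ^ b - 1) * (-(q + 2)) by
      rw [hr, ← pow_add]; linear_combination (-1 : ℤ) * hq,
      Int.add_mul_emod_self_left, Int.emod_eq_of_lt hr0 hrlt]
  obtain ⟨X', hX'⟩ : x ∣ x ^ a := dvd_pow_self x ha.ne'
  obtain ⟨Y', hY'⟩ : x ∣ x ^ b := dvd_pow_self x hb.ne'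
  obtain ⟨G', hG'⟩ : x ∣ x ^ g := dvd_pow_self x hg.ne'
  have hrx :
      r = g + 2 + x * (x * X' * Y' - 2 * X' - 2 * Y' - X' * g * S + g * G' * S - g * Y') := by
    rw [hr]
    linear_combination (x ^ b - 2 - g * S) * hX' + (x * X' - 2 - g) * hY' + g * S * hG' - g * hS
  rw [hmod, hrx, Int.add_mul_emod_self_left, Int.emod_eq_of_lt (by positivity) hgx]

theorem add_two_lt_two_pow {n : ℕ} (hn : 3 ≤ n) : n + 2 < 2 ^ n := by
  induction n, hn using Nat.le_induction with
  | base => norm_num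
  | succ n _ ih => rw [pow_succ]; omega

theorem gcd_mod_mod_base2 (a b : ℕ) (ha : 1 ≤ a) (hb : 1 ≤ b) (hab : (a, b) ≠ (1, 1)) :
    (Nat.gcd a b : ℤ) =
      ((-(2 : ℤ) ^ (a * b * (a * b + a + b)))
          % (((2 : ℤ) ^ (a ^ 2 * b) - 1) * ((2 : ℤ) ^ (a * b ^ 2) - 1)))
        % (2 : ℤ) ^ (a * b) - 2 := by
  have ha_le_ab : a ≤ a * b := Nat.le_mul_of_pos_right a hb
  have hb_le_ab : b ≤ a * b := Nat.le_mul_of_pos_left b ha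
  rcases Nat.lt_or_ge (a * b) 3 with hsmall | hlarge
  · obtain ⟨rfl, rfl⟩ | ⟨rfl, rfl⟩ : a = 1 ∧ b = 2 ∨ a = 2 ∧ b = 1 := by
      have : a ≤ 2 := by omega
      have : b ≤ 2 := by omega
      interval_cases a <;> interval_cases b <;> simp_all
    all_goals norm_num
  have hx : (8 : ℤ) ≤ 2 ^ (a * b) :=
    (pow_le_pow_right₀ (by norm_num : (1 : ℤ) ≤ 2) hlarge).trans' (by norm_num)
  have hgx : (a.gcd b : ℤ) + 2 < 2 ^ (a * b) := by
    have := (Nat.gcd_le_left b ha).trans ha_le_ab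
    have := add_two_lt_two_pow hlarge
    exact_mod_cast (by omega : a.gcd b + 2 < 2 ^ (a * b))
  have key := neg_pow_emod_emod_eq_gcd_add_two ha hb hx hgx
  rw [show a ^ 2 * b = a * b * a by ring, show a * b ^ 2 = a * b * b by ring,
    pow_mul (2 : ℤ) (a * b), pow_mul (2 : ℤ) (a * b), pow_mul (2 : ℤ) (a * b), key]
  ring
end

section
/- For all natural numbers a, b ≥ 1 with (a,b) ≠ (1,1), gcd(a,b) = (⌊3^(ab(ab+a+b)) / ((3^(a²b) − 1)(3^(ab²) − 1))⌋ mod 3^(ab)) − 1. -/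
open Finset

set_option maxHeartbeats 1000000

private lemma tele (x d e : ℕ) (hx : 1 ≤ x) :
    ∀ q : ℕ, d * q ≤ e →
      (x ^ d - 1) * (∑ j ∈ range q, x ^ (e - d * (j + 1))) + x ^ (e - d * q) = x ^ e := by
  intro q
  induction q with
  | zero => simp
  | succ q ih =>
    intro h
    have hq : d * q ≤ e := by
      have h2 : d * (q + 1) = d * q + d := by ring
      omega
    rw [Finset.sum_range_succ, mul_add]
    have hxd : 1 ≤ x ^ d := Nat.one_le_pow _ _ hx
    have key : (x ^ d - 1) * x ^ (e - d * (q + 1)) + x ^ (e - d * (q + 1))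
        = x ^ (e - d * q) := by
      rw [Nat.sub_one_mul, Nat.sub_add_cancel (Nat.le_mul_of_pos_left _ (by positivity)),
        ← pow_add]
      congr 1
      have h2 : d * (q + 1) = d * q + d := by ring
      omega
    calc (x ^ d - 1) * (∑ j ∈ range q, x ^ (e - d * (j + 1)))
          + (x ^ d - 1) * x ^ (e - d * (q + 1)) + x ^ (e - d * (q + 1))
        = (x ^ d - 1) * (∑ j ∈ range q, x ^ (e - d * (j + 1)))
          + ((x ^ d - 1) * x ^ (e - d * (q + 1)) + x ^ (e - d * (q + 1))) := by ring
      _ = (x ^ d - 1) * (∑ j ∈ range q, x ^ (e - d * (j + 1))) + x ^ (e - d * q) := by rw [key]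
      _ = x ^ e := ih hq

private lemma div_mod_pair (n m q r : ℕ) (hm : 0 < m) (h : m * q + r = n) (hr : r < m) :
    n / m = q ∧ n % m = r := by
  subst h
  refine ⟨?_, ?_⟩
  · rw [Nat.mul_add_div hm, Nat.div_eq_of_lt hr, add_zero]
  · rw [Nat.mul_add_mod, Nat.mod_eq_of_lt hr]

private lemma pow_div_pred (x d e : ℕ) (hx : 3 ≤ x) (hd : 1 ≤ d) :
    x ^ e / (x ^ d - 1) = ∑ j ∈ range (e / d), x ^ (e - d * (j + 1)) ∧
      x ^ e % (x ^ d - 1) = x ^ (e % d) := by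
  have hmul : d * (e / d) ≤ e := by
    rw [mul_comm]; exact Nat.div_mul_le_self e d
  have h := tele x d e (by omega) (e / d) hmul
  have hr : e - d * (e / d) = e % d := by
    have := Nat.mod_add_div e d; omega
  rw [hr] at h
  have hd1 : 1 ≤ x ^ (d - 1) := Nat.one_le_pow _ _ (by omega)
  have h3 : x ^ d = x ^ (d - 1) * x := by
    rw [← pow_succ]; congr 1; omega
  have hrlt : x ^ (e % d) < x ^ d - 1 := by
    have h1 : e % d < d := Nat.mod_lt _ (by omega)
    have h2 : x ^ (e % d) ≤ x ^ (d - 1) := Nat.pow_le_pow_right (by omega) (by omega)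
    have h4 : 3 * x ^ (d - 1) ≤ x ^ d := by rw [h3]; nlinarith
    omega
  exact div_mod_pair _ _ _ _ (by omega) h hrlt

private lemma quot_mod (x b e : ℕ) (hx : 3 ≤ x) (hb : 1 ≤ b) :
    (x ^ e / (x ^ b - 1)) % x = if b ∣ e ∧ b ≤ e then 1 else 0 := by
  rw [(pow_div_pred x b e hx hb).1, Finset.sum_nat_mod]
  have hterm : ∀ j ∈ range (e / b),
      x ^ (e - b * (j + 1)) % x = if j + 1 = e / b ∧ b ∣ e then 1 else 0 := by
    intro j hj
    rw [mem_range] at hj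
    have hle : b * (j + 1) ≤ e := by
      calc b * (j + 1) ≤ b * (e / b) := Nat.mul_le_mul_left _ (by omega)
        _ ≤ e := by rw [mul_comm]; exact Nat.div_mul_le_self e b
    by_cases hz : e - b * (j + 1) = 0
    · have he : e = b * (j + 1) := by omega
      have hcond : j + 1 = e / b ∧ b ∣ e := by
        constructor
        · rw [he, Nat.mul_div_cancel_left _ (by omega)]
        · exact ⟨j + 1, he⟩
      rw [hz, if_pos hcond]
      exact Nat.one_mod_eq_one.mpr (by omega)
    · have hcond : ¬(j + 1 = e / b ∧ b ∣ e) := by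
        rintro ⟨h1, h2⟩
        have : e = b * (e / b) := (Nat.mul_div_cancel' h2).symm
        rw [← h1] at this
        omega
      rw [if_neg hcond]
      have : x ^ (e - b * (j + 1)) = x * x ^ (e - b * (j + 1) - 1) := by
        rw [← pow_succ']; congr 1; omega
      rw [this, Nat.mul_mod_right]
  rw [Finset.sum_congr rfl hterm]
  by_cases hcase : b ∣ e ∧ b ≤ e
  · have h1 : 1 ≤ e / b := (Nat.one_le_div_iff (by omega)).mpr hcase.2
    have hconv : ∀ j ∈ range (e / b),
        (if j + 1 = e / b ∧ b ∣ e then (1:ℕ) else 0) = if j = e / b - 1 then 1 else 0 := by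
      intro j hj
      refine if_congr ?_ rfl rfl
      constructor
      · rintro ⟨h2, _⟩; omega
      · intro h2; exact ⟨by omega, hcase.1⟩
    have hmem : e / b - 1 ∈ range (e / b) := by rw [mem_range]; omega
    rw [Finset.sum_congr rfl hconv,
      Finset.sum_ite_eq' (range (e / b)) (e / b - 1) (fun _ => (1:ℕ)),
      if_pos hmem, if_pos hcase]
    exact Nat.one_mod_eq_one.mpr (by omega)
  · have hconv : ∀ j ∈ range (e / b),
        (if j + 1 = e / b ∧ b ∣ e then (1:ℕ) else 0) = 0 := by
      intro j hj
      rw [mem_range] at hj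
      refine if_neg ?_
      rintro ⟨h1, h2⟩
      have he : b ≤ e := (Nat.one_le_div_iff (by omega)).mp (by omega)
      exact hcase ⟨h2, he⟩
    rw [Finset.sum_congr rfl hconv, if_neg hcase]
    simp

private lemma sum_div_eq (n d : ℕ) (f : ℕ → ℕ) (hd : 0 < d)
    (h : ∑ i ∈ range n, f i % d < d) :
    (∑ i ∈ range n, f i) / d = ∑ i ∈ range n, f i / d := by
  have key : ∑ i ∈ range n, f i = d * (∑ i ∈ range n, f i / d) + ∑ i ∈ range n, f i % d := by
    rw [Finset.mul_sum, ← Finset.sum_add_distrib]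
    refine Finset.sum_congr rfl fun i _ => ?_
    exact (Nat.div_add_mod (f i) d).symm
  rw [key, Nat.mul_add_div hd, Nat.div_eq_of_lt h, add_zero]

private lemma count_lemma (a b : ℕ) (ha : 1 ≤ a) (hb : 1 ≤ b) :
    ∑ i ∈ range (b + 1), (if (b / Nat.gcd a b) ∣ i then (1:ℕ) else 0) = Nat.gcd a b + 1 := by
  set g := Nat.gcd a b with hg
  set d := b / g with hd
  have hgpos : 0 < g := Nat.gcd_pos_of_pos_left _ (by omega)
  have hdg : d * g = b := Nat.div_mul_cancel (Nat.gcd_dvd_right a b)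
  have hdpos : 0 < d := by
    rcases Nat.eq_zero_or_pos d with h | h
    · rw [h] at hdg; omega
    · exact h
  rw [← Finset.card_filter]
  have himg : filter (fun i => d ∣ i) (range (b + 1)) = image (· * d) (range (g + 1)) := by
    ext i
    simp only [mem_filter, mem_range, mem_image]
    constructor
    · rintro ⟨hib, ⟨k, hk⟩⟩
      refine ⟨k, ?_, (mul_comm k d).trans hk.symm⟩
      by_contra hkg
      push_neg at hkg
      have : d * (g + 1) ≤ d * k := Nat.mul_le_mul_left _ (by omega)
      nlinarith
    · rintro ⟨k, hk, hki⟩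
      constructor
      · have h1 : k * d ≤ g * d := Nat.mul_le_mul_right _ (by omega)
        have h2 : g * d = b := by rw [mul_comm]; exact hdg
        omega
      · exact ⟨k, by rw [← hki, mul_comm]⟩
  rw [himg, Finset.card_image_of_injective _ (mul_left_injective₀ (by omega))]
  simp

private lemma key (a b x : ℕ) (ha : 1 ≤ a) (hb : 1 ≤ b) (hx : 2 * b + 3 ≤ x) :
    x ^ (a * b + a + b) / ((x ^ a - 1) * (x ^ b - 1)) % x = Nat.gcd a b + 1 := by
  have hx3 : 3 ≤ x := by omega
  set N := a * b + a + b with hN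
  set q1 := N / a with hq1def
  set A := ∑ i ∈ range q1, x ^ (N - a * (i + 1)) with hA
  have hxa2 : 3 ≤ x ^ a := le_trans hx3 (Nat.le_self_pow (by omega) x)
  have hxb2 : 3 ≤ x ^ b := le_trans hx3 (Nat.le_self_pow (by omega) x)
  have hmul : a * q1 ≤ N := by rw [hq1def, mul_comm]; exact Nat.div_mul_le_self N a
  have hgeom : (x ^ a - 1) * A + x ^ (N - a * q1) = x ^ N := tele x a N (by omega) q1 hmul
  have hNq : N - a * q1 = N % a := by
    have := Nat.mod_add_div N a
    rw [hq1def]; omega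
  rw [hNq] at hgeom
  set Q := A / (x ^ b - 1) with hQ
  set R := A % (x ^ b - 1) with hR
  have hQR : (x ^ b - 1) * Q + R = A := Nat.div_add_mod A (x ^ b - 1)
  have hRlt : R < x ^ b - 1 := Nat.mod_lt _ (by omega)
  have hbig : x ^ N = ((x ^ a - 1) * (x ^ b - 1)) * Q + ((x ^ a - 1) * R + x ^ (N % a)) := by
    rw [← hgeom, ← hQR]; ring
  have hNa : N % a < a := Nat.mod_lt _ (by omega)
  have hpa : x ^ (N % a) ≤ x ^ (a - 1) := Nat.pow_le_pow_right (by omega) (by omega)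
  have hxa1 : 1 ≤ x ^ (a - 1) := Nat.one_le_pow _ _ (by omega)
  have hsplita : x ^ a = x ^ (a - 1) * x := by rw [← pow_succ]; congr 1; omega
  have hxa3 : 3 * x ^ (a - 1) ≤ x ^ a := by rw [hsplita]; nlinarith
  have hrem : (x ^ a - 1) * R + x ^ (N % a) < (x ^ a - 1) * (x ^ b - 1) := by
    have h1 : (x ^ a - 1) * R ≤ (x ^ a - 1) * (x ^ b - 2) :=
      Nat.mul_le_mul_left _ (by omega)
    have h2 : (x ^ a - 1) * (x ^ b - 1) = (x ^ a - 1) * (x ^ b - 2) + (x ^ a - 1) := by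
      have h3 : x ^ b - 1 = (x ^ b - 2) + 1 := by omega
      rw [h3, Nat.mul_add, mul_one]
    omega
  have hdiv : x ^ N / ((x ^ a - 1) * (x ^ b - 1)) = Q := by
    rw [hbig, Nat.mul_add_div (Nat.mul_pos (by omega) (by omega)), Nat.div_eq_of_lt hrem, add_zero]
  rw [hdiv]
  -- bound q1
  have hq1le : q1 ≤ x - 2 := by
    have h1 : q1 < 2 * b + 2 := by
      rw [hq1def, Nat.div_lt_iff_lt_mul (by omega)]
      have hba : b ≤ a * b := Nat.le_mul_of_pos_left _ (by omega)
      have hexp : (2 * b + 2) * a = 2 * (a * b) + 2 * a := by ring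
      omega
    omega
  have hxb1 : 1 ≤ x ^ (b - 1) := Nat.one_le_pow _ _ (by omega)
  have hsplitb : x ^ b = x ^ (b - 1) * x := by rw [← pow_succ]; congr 1; omega
  have hmodsum : ∑ i ∈ range q1, x ^ (N - a * (i + 1)) % (x ^ b - 1) < x ^ b - 1 := by
    have hbd : ∀ i ∈ range q1, x ^ (N - a * (i + 1)) % (x ^ b - 1) ≤ x ^ (b - 1) := by
      intro i _
      rw [(pow_div_pred x b (N - a * (i + 1)) hx3 (by omega)).2]
      have : (N - a * (i + 1)) % b < b := Nat.mod_lt _ (by omega)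
      exact Nat.pow_le_pow_right (by omega) (by omega)
    calc ∑ i ∈ range q1, x ^ (N - a * (i + 1)) % (x ^ b - 1)
        ≤ q1 * x ^ (b - 1) := by
          simpa using Finset.sum_le_card_nsmul _ _ _ hbd
      _ ≤ (x - 2) * x ^ (b - 1) := Nat.mul_le_mul_right _ hq1le
      _ < x ^ b - 1 := by
          have hkey : (x - 2) * x ^ (b - 1) + 2 * x ^ (b - 1) = x ^ b := by
            rw [← Nat.add_mul, hsplitb]
            have : x - 2 + 2 = x := by omega
            rw [this, mul_comm]
          omega
  have hQsum : Q = ∑ i ∈ range q1, x ^ (N - a * (i + 1)) / (x ^ b - 1) := by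
    rw [hQ, hA]; exact sum_div_eq q1 (x ^ b - 1) _ (by omega) hmodsum
  rw [hQsum, Finset.sum_nat_mod]
  -- gcd setup
  have hgpos : 0 < Nat.gcd a b := Nat.gcd_pos_of_pos_left _ (by omega)
  set g := Nat.gcd a b with hg
  set dd := b / g with hdd
  have hga : g ∣ a := Nat.gcd_dvd_left a b
  have hgb' : g ∣ b := Nat.gcd_dvd_right a b
  have hag : g * (a / g) = a := Nat.mul_div_cancel' hga
  have hbg : g * dd = b := Nat.mul_div_cancel' hgb'
  have hcop : Nat.Coprime (a / g) dd := Nat.coprime_div_gcd_div_gcd hgpos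
  have hiff : ∀ i : ℕ, (b ∣ N - a * (i + 1) ∧ b ≤ N - a * (i + 1)) ↔ (dd ∣ i ∧ i ≤ b) := by
    intro i
    have hexp : a * (i + 1) = a * i + a := by ring
    have habb : b ∣ a * b + b := ⟨a + 1, by ring⟩
    constructor
    · rintro ⟨hdvd, hle⟩
      have h1 : a * (i + 1) + b ≤ N := by omega
      have h2 : a * i ≤ a * b := by omega
      have hib : i ≤ b := Nat.le_of_mul_le_mul_left h2 (by omega)
      have heq : N - a * (i + 1) = a * b + b - a * i := by omega
      have hdvd2 : b ∣ a * i := by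
        have hx2 : a * i = (a * b + b) - (N - a * (i + 1)) := by omega
        rw [hx2]
        exact Nat.dvd_sub habb hdvd
      have hrw : a * i = g * (a / g * i) := by rw [← mul_assoc, hag]
      rw [hrw, ← hbg] at hdvd2
      have h4 : dd ∣ (a / g) * i := (mul_dvd_mul_iff_left (by omega : g ≠ 0)).mp hdvd2
      have h4' : dd ∣ i * (a / g) := by rwa [mul_comm] at h4
      have h5 : dd ∣ i := Nat.Coprime.dvd_of_dvd_mul_right hcop.symm h4'
      exact ⟨h5, hib⟩
    · rintro ⟨⟨k, hk⟩, hib⟩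
      have hdvd2 : b ∣ a * i := by
        refine ⟨(a / g) * k, ?_⟩
        calc a * i = g * (a / g) * (dd * k) := by rw [hag, hk]
          _ = g * dd * (a / g * k) := by ring
          _ = b * (a / g * k) := by rw [hbg]
      have h2 : a * i ≤ a * b := Nat.mul_le_mul_left _ hib
      have h1 : a * (i + 1) + b ≤ N := by omega
      have heq : N - a * (i + 1) = a * b + b - a * i := by omega
      constructor
      · rw [heq]; exact Nat.dvd_sub habb hdvd2
      · omega
  have hterm : ∀ i ∈ range q1, x ^ (N - a * (i + 1)) / (x ^ b - 1) % x
      = if dd ∣ i ∧ i ≤ b then 1 else 0 := by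
    intro i _
    rw [quot_mod x b _ hx3 hb]
    exact if_congr (hiff i) rfl rfl
  rw [Finset.sum_congr rfl hterm]
  have hb1q1 : b + 1 ≤ q1 := by
    rw [hq1def, Nat.le_div_iff_mul_le (by omega)]
    have : (b + 1) * a = a * b + a := by ring
    omega
  have hsubset : ∑ i ∈ range q1, (if dd ∣ i ∧ i ≤ b then (1:ℕ) else 0)
      = ∑ i ∈ range (b + 1), (if dd ∣ i then (1:ℕ) else 0) := by
    rw [← Finset.sum_subset (Finset.range_subset_range.mpr hb1q1)
      (fun i _ hnot => by
        rw [mem_range] at hnot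
        exact if_neg fun hc => hnot (Nat.lt_succ_of_le hc.2))]
    refine Finset.sum_congr rfl fun i hi => ?_
    rw [mem_range] at hi
    exact if_congr (and_iff_left (by omega)) rfl rfl
  rw [hsubset, count_lemma a b ha hb]
  have hgble : g ≤ b := Nat.le_of_dvd (by omega) hgb'
  exact Nat.mod_eq_of_lt (by omega)

theorem gcd_div_mod_base3 (a b : ℕ) (ha : 1 ≤ a) (hb : 1 ≤ b) (hab : (a, b) ≠ (1, 1)) :
    Nat.gcd a b =
      (3 ^ (a * b * (a * b + a + b)) / ((3 ^ (a ^ 2 * b) - 1) * (3 ^ (a * b ^ 2) - 1)))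
          % 3 ^ (a * b) - 1 := by
  have hne : ¬(a = 1 ∧ b = 1) := by
    rintro ⟨h1, h2⟩; exact hab (by rw [h1, h2])
  have hab2 : 2 ≤ a * b := by
    by_contra h
    push_neg at h
    have h1 : a ≤ a * b := Nat.le_mul_of_pos_right a (by omega)
    have h2 : b ≤ a * b := Nat.le_mul_of_pos_left b (by omega)
    exact hne ⟨by omega, by omega⟩
  have haux : ∀ n, 2 ≤ n → 2 * n + 3 ≤ 3 ^ n := by
    intro n
    induction n with
    | zero => omega
    | succ m ih =>
      intro h
      rcases Nat.lt_or_ge m 2 with h2 | h2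
      · interval_cases m
        · omega
        · norm_num
      · have h3 := ih h2
        have h4 : 3 ^ (m + 1) = 3 * 3 ^ m := by ring
        omega
  have hx : 2 * b + 3 ≤ 3 ^ (a * b) := by
    have h1 : b ≤ a * b := Nat.le_mul_of_pos_left b (by omega)
    have h2 := haux (a * b) hab2
    omega
  have e1 : a ^ 2 * b = a * b * a := by ring
  have e2 : a * b ^ 2 = a * b * b := by ring
  rw [e1, e2, pow_mul 3 (a * b), pow_mul 3 (a * b), pow_mul 3 (a * b),
    key a b (3 ^ (a * b)) ha hb hx]
  omega
end

section
/- For all natural numbers a, b ≥ 1 and all natural numbers n ≥ 3, the number of pairs (x,y) of natural numbers satisfying a·x + b·y = n equals ⌊5^(n² + an + bn) / ((5^(an) − 1)(5^(bn) − 1))⌋ mod 5^n. -/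
open Finset

private lemma geom_lem (q c : ℕ) (hq : 1 ≤ q) (hc : 1 ≤ c) (m : ℕ) :
    (q ^ c - 1) * (∑ x ∈ range (m / c + 1), q ^ (m - c * x)) + q ^ (m % c) = q ^ (m + c) := by
  induction m using Nat.strong_induction_on with
  | _ m ih =>
    have h1 : 1 ≤ q ^ c := Nat.one_le_pow _ _ hq
    have h2 : q ^ c - 1 + 1 = q ^ c := by omega
    rcases lt_or_ge m c with h | h
    · rw [Nat.div_eq_of_lt h, Nat.mod_eq_of_lt h]
      simp only [zero_add, range_one, sum_singleton, Nat.mul_zero, Nat.sub_zero]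
      have : (q ^ c - 1) * q ^ m + q ^ m = ((q ^ c - 1) + 1) * q ^ m := by ring
      rw [this, h2, ← pow_add, add_comm]
    · have hdiv : m / c = (m - c) / c + 1 := Nat.div_eq_sub_div hc h
      have hmod : m % c = (m - c) % c := Nat.mod_eq_sub_mod h
      rw [hdiv, hmod, Finset.sum_range_succ']
      have hterm : ∀ x : ℕ, m - c * (x + 1) = (m - c) - c * x := fun x => by
        rw [Nat.mul_succ, ← Nat.sub_sub, Nat.sub_right_comm]
      simp only [hterm, Nat.mul_zero, Nat.sub_zero]
      rw [Nat.mul_add, Nat.add_right_comm, ih (m - c) (by omega)]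
      have hmc : m - c + c = m := Nat.sub_add_cancel h
      rw [hmc]
      have : q ^ m + (q ^ c - 1) * q ^ m = ((q ^ c - 1) + 1) * q ^ m := by ring
      rw [this, h2, ← pow_add, add_comm c m]

private lemma sum_mod_congr {ι : Type*} (s : Finset ι) (f g : ι → ℕ) (q : ℕ)
    (h : ∀ i ∈ s, f i % q = g i % q) :
    (∑ i ∈ s, f i) % q = (∑ i ∈ s, g i) % q := by
  rw [Finset.sum_nat_mod, Finset.sum_congr rfl h, ← Finset.sum_nat_mod]

private lemma key_lem (a b n q : ℕ) (ha : 1 ≤ a) (hb : 1 ≤ b) (hq : (n + 2) ^ 2 < q) :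
    ((Finset.range (n + 1) ×ˢ Finset.range (n + 1)).filter
        (fun p => a * p.1 + b * p.2 = n)).card
      = q ^ (n + a + b) / ((q ^ a - 1) * (q ^ b - 1)) % q := by
  have hq2 : 2 ≤ q := by
    have h4 : (n + 2) ^ 2 = n ^ 2 + 4 * n + 4 := by ring
    omega
  have hq1 : 1 ≤ q := by omega
  have hqa : 2 ≤ q ^ a := le_trans hq2 (Nat.le_self_pow (by omega) q)
  have hqb : 2 ≤ q ^ b := le_trans hq2 (Nat.le_self_pow (by omega) q)
  set S : ℕ := ∑ x ∈ range (n / a + 1), ∑ y ∈ range ((n - a * x) / b + 1),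
      q ^ (n - a * x - b * y) with hS
  set T : ℕ := ∑ x ∈ range (n / a + 1), q ^ ((n - a * x) % b) with hT
  set F : ℕ := ∑ x ∈ range (n / a + 1), q ^ (n - a * x) with hF
  -- Step 1 : (q^b - 1) * S + T = q^b * F
  have step1 : (q ^ b - 1) * S + T = q ^ b * F := by
    rw [hS, hT, hF, Finset.mul_sum, ← Finset.sum_add_distrib, Finset.mul_sum]
    refine Finset.sum_congr rfl (fun x _ => ?_)
    have := geom_lem q b hq1 hb (n - a * x)
    rw [this, pow_add, mul_comm]
  -- Step 2 : main identity
  have hfa := geom_lem q a hq1 ha n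
  have E : ((q ^ a - 1) * (q ^ b - 1)) * S + ((q ^ a - 1) * T + q ^ b * q ^ (n % a))
      = q ^ (n + a + b) := by
    calc ((q ^ a - 1) * (q ^ b - 1)) * S + ((q ^ a - 1) * T + q ^ b * q ^ (n % a))
        = (q ^ a - 1) * ((q ^ b - 1) * S + T) + q ^ b * q ^ (n % a) := by ring
      _ = (q ^ a - 1) * (q ^ b * F) + q ^ b * q ^ (n % a) := by rw [step1]
      _ = q ^ b * ((q ^ a - 1) * F + q ^ (n % a)) := by ring
      _ = q ^ b * q ^ (n + a) := by rw [hfa]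
      _ = q ^ (n + a + b) := by rw [← pow_add]; congr 1; omega
  -- Bound on the remainder
  have hTb : T ≤ (n + 1) * q ^ (b - 1) := by
    calc T ≤ (n / a + 1) * q ^ (b - 1) := by
          rw [hT]
          have := Finset.sum_le_card_nsmul (range (n / a + 1))
            (fun x => q ^ ((n - a * x) % b)) (q ^ (b - 1))
            (fun x _ => Nat.pow_le_pow_right hq1
              (by have := Nat.mod_lt (n - a * x) (show 0 < b by omega); omega))
          simpa [smul_eq_mul] using this
      _ ≤ (n + 1) * q ^ (b - 1) := by
          have := Nat.div_le_self n a
          exact Nat.mul_le_mul_right _ (by omega)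
  have hAb : q ^ b * q ^ (n % a) ≤ q ^ a * q ^ (b - 1) := by
    rw [← pow_add, ← pow_add]
    refine Nat.pow_le_pow_right hq1 ?_
    have : n % a < a := Nat.mod_lt _ (by omega)
    omega
  have hqa2 : q ^ a ≤ 2 * (q ^ a - 1) := by omega
  have hDb : q ^ (b - 1) * (q - 1) ≤ q ^ b - 1 := by
    have hb1 : q ^ (b - 1) * q = q ^ b := by rw [← pow_succ]; congr 1; omega
    have h1b : 1 ≤ q ^ (b - 1) := Nat.one_le_pow _ _ hq1
    rw [Nat.mul_sub, hb1, mul_one]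
    omega
  have hpos : 1 ≤ q ^ (b - 1) := Nat.one_le_pow _ _ hq1
  have hn3 : n + 3 < q - 1 := by
    have h4 : (n + 2) ^ 2 = n ^ 2 + 4 * n + 4 := by ring
    omega
  have hRD : (q ^ a - 1) * T + q ^ b * q ^ (n % a) < (q ^ a - 1) * (q ^ b - 1) := by
    calc (q ^ a - 1) * T + q ^ b * q ^ (n % a)
        ≤ (q ^ a - 1) * ((n + 1) * q ^ (b - 1)) + q ^ a * q ^ (b - 1) :=
          Nat.add_le_add (Nat.mul_le_mul_left _ hTb) hAb
      _ ≤ (q ^ a - 1) * ((n + 1) * q ^ (b - 1)) + 2 * (q ^ a - 1) * q ^ (b - 1) :=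
          Nat.add_le_add_left (Nat.mul_le_mul_right _ hqa2) _
      _ = (q ^ a - 1) * q ^ (b - 1) * (n + 3) := by ring
      _ < (q ^ a - 1) * q ^ (b - 1) * (q - 1) := by
          have h1a : 1 ≤ q ^ a - 1 := by omega
          have : 1 ≤ (q ^ a - 1) * q ^ (b - 1) := Nat.mul_le_mul h1a hpos
          exact mul_lt_mul_of_pos_left hn3 (by omega)
      _ = (q ^ a - 1) * (q ^ (b - 1) * (q - 1)) := by ring
      _ ≤ (q ^ a - 1) * (q ^ b - 1) := Nat.mul_le_mul_left _ hDb
  -- the division equals S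
  have hdiv : q ^ (n + a + b) / ((q ^ a - 1) * (q ^ b - 1)) = S := by
    rw [← E, Nat.mul_add_div (Nat.mul_pos (by omega) (by omega)), Nat.div_eq_of_lt hRD, add_zero]
  rw [hdiv]
  -- S mod q
  set c' : ℕ := ∑ x ∈ range (n / a + 1), ∑ y ∈ range ((n - a * x) / b + 1),
      (if a * x + b * y = n then 1 else 0) with hc'
  have hmodS : S % q = c' % q := by
    rw [hS, hc']
    refine sum_mod_congr _ _ _ _ (fun x hx => ?_)
    refine sum_mod_congr _ _ _ _ (fun y hy => ?_)
    have hax : a * x ≤ n := by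
      rw [Finset.mem_range] at hx
      have := (Nat.le_div_iff_mul_le (by omega : 0 < a)).1 (by omega : x ≤ n / a)
      have hc : a * x = x * a := Nat.mul_comm _ _
      omega
    have hby : b * y ≤ n - a * x := by
      rw [Finset.mem_range] at hy
      have := (Nat.le_div_iff_mul_le (by omega : 0 < b)).1 (by omega : y ≤ (n - a * x) / b)
      have hc : b * y = y * b := Nat.mul_comm _ _
      omega
    rcases eq_or_ne (a * x + b * y) n with he | he
    · rw [if_pos he]
      have : n - a * x - b * y = 0 := by omega
      rw [this, pow_zero]
    · rw [if_neg he]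
      obtain ⟨e, hee⟩ : ∃ e, n - a * x - b * y = e + 1 := ⟨n - a * x - b * y - 1, by omega⟩
      rw [hee, pow_succ, Nat.mul_mod_left, Nat.zero_mod]
  have hc'lt : c' < q := by
    have h1 : c' ≤ (n / a + 1) * (n + 1) := by
      rw [hc']
      have := Finset.sum_le_card_nsmul (range (n / a + 1))
        (fun x => ∑ y ∈ range ((n - a * x) / b + 1), (if a * x + b * y = n then 1 else 0))
        (n + 1) (fun x _ => ?_)
      · simpa [smul_eq_mul] using this
      · calc (∑ y ∈ range ((n - a * x) / b + 1), (if a * x + b * y = n then 1 else 0))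
            ≤ ∑ y ∈ range ((n - a * x) / b + 1), 1 :=
              Finset.sum_le_sum (fun y _ => by split <;> omega)
          _ = (n - a * x) / b + 1 := by simp
          _ ≤ n + 1 := by
              have h2 := Nat.div_le_self (n - a * x) b
              omega
    have h2 : n / a ≤ n := Nat.div_le_self n a
    nlinarith
  rw [hmodS, Nat.mod_eq_of_lt hc'lt]
  -- c' equals the cardinality
  rw [Finset.card_filter, Finset.sum_product, hc']
  -- extend inner sums
  have inner_ext : ∀ x, a * x ≤ n →
      (∑ y ∈ range ((n - a * x) / b + 1), (if a * x + b * y = n then 1 else 0))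
        = ∑ y ∈ range (n + 1), (if a * x + b * y = n then 1 else 0) := by
    intro x hax
    refine Finset.sum_subset ?_ (fun y hy hy' => ?_)
    · apply Finset.range_subset_range.2
      have := Nat.div_le_self (n - a * x) b
      omega
    · rw [Finset.mem_range] at hy hy'
      have hlt : (n - a * x) / b < y := by omega
      have : n - a * x < y * b := (Nat.div_lt_iff_lt_mul (by omega : 0 < b)).1 hlt
      rw [if_neg]
      have hc : b * y = y * b := Nat.mul_comm _ _
      omega
  have outer_ext :
      (∑ x ∈ range (n / a + 1), ∑ y ∈ range (n + 1), (if a * x + b * y = n then 1 else 0))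
        = ∑ x ∈ range (n + 1), ∑ y ∈ range (n + 1), (if a * x + b * y = n then 1 else 0) := by
    refine Finset.sum_subset ?_ (fun x hx hx' => ?_)
    · apply Finset.range_subset_range.2
      have := Nat.div_le_self n a
      omega
    · rw [Finset.mem_range] at hx hx'
      have hlt : n / a < x := by omega
      have hna : n < x * a := (Nat.div_lt_iff_lt_mul (by omega : 0 < a)).1 hlt
      refine Finset.sum_eq_zero (fun y _ => ?_)
      rw [if_neg]
      have hc : a * x = x * a := Nat.mul_comm _ _
      omega
  rw [Finset.sum_congr rfl (fun x hx => inner_ext x ?_), outer_ext]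
  rw [Finset.mem_range] at hx
  have := (Nat.le_div_iff_mul_le (by omega : 0 < a)).1 (by omega : x ≤ n / a)
  have hc : a * x = x * a := Nat.mul_comm _ _
  omega

theorem count_solutions_term (a b : ℕ) (ha : 1 ≤ a) (hb : 1 ≤ b) (n : ℕ) (hn : 3 ≤ n) :
    {p : ℕ × ℕ | a * p.1 + b * p.2 = n}.ncard =
      (5 ^ (n ^ 2 + a * n + b * n) / ((5 ^ (a * n) - 1) * (5 ^ (b * n) - 1))) % 5 ^ n := by
  have hq : (n + 2) ^ 2 < 5 ^ n := by
    clear ha hb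
    induction n, hn using Nat.le_induction with
    | base => norm_num
    | succ m hm ih =>
      have h5 : (5:ℕ) ^ (m + 1) = 5 * 5 ^ m := by ring
      nlinarith [ih, sq_nonneg m]
  have e1 : (5:ℕ) ^ (n ^ 2 + a * n + b * n) = (5 ^ n) ^ (n + a + b) := by
    rw [← pow_mul]; congr 1; ring
  have e2 : (5:ℕ) ^ (a * n) = (5 ^ n) ^ a := by rw [← pow_mul]; congr 1; ring
  have e3 : (5:ℕ) ^ (b * n) = (5 ^ n) ^ b := by rw [← pow_mul]; congr 1; ring
  rw [e1, e2, e3]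
  have hset : {p : ℕ × ℕ | a * p.1 + b * p.2 = n} =
      ↑((Finset.range (n + 1) ×ˢ Finset.range (n + 1)).filter
        (fun p => a * p.1 + b * p.2 = n)) := by
    ext ⟨x, y⟩
    simp only [Set.mem_setOf_eq, Finset.coe_filter, Finset.mem_product, Finset.mem_range,
      Set.mem_setOf_eq]
    constructor
    · intro h
      have h1 : x ≤ a * x := Nat.le_mul_of_pos_left x (by omega)
      have h2 : y ≤ b * y := Nat.le_mul_of_pos_left y (by omega)
      exact ⟨⟨by omega, by omega⟩, h⟩
    · exact fun h => h.2
  rw [hset, Set.ncard_coe_finset]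
  exact key_lem a b n (5 ^ n) ha hb hq
end
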